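/- arXiv:2007.06699 — 3 statements merged into one kernel-verified Lean document; each statement's English description precedes it below -/
import Mathlib

section
/- Fix p in the K-simplex and reward matrices μ¹, μ² ∈ [0,1]^{N×K}. Then |NSW(p,μ¹) − NSW(p,μ²)| ≤ ∑_{i=1}^N ∑_{j=1}^K p_j · |μ¹_{i,j} − μ²_{i,j}|. -/
open Finset

noncomputable def NSW {N K : ℕ} (p : Fin K → ℝ) (μ : Fin N → Fin K → ℝ) : ℝ :=
  ∏ i, ∑ j, p j * μ i j

def simplex (K : ℕ) : Set (Fin K → ℝ) := {p | (∀ j, 0 ≤ p j) ∧ ∑ j, p j = 1}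

lemma abs_prod_sub_prod_le {α : Type*} (s : Finset α) (f g : α → ℝ)
    (hf : ∀ i, 0 ≤ f i ∧ f i ≤ 1) (hg : ∀ i, 0 ≤ g i ∧ g i ≤ 1) :
    |∏ i ∈ s, f i - ∏ i ∈ s, g i| ≤ ∑ i ∈ s, |f i - g i| := by
  classical
  induction s using Finset.induction with
  | empty => simp
  | @insert a s ha ih =>
    rw [Finset.prod_insert ha, Finset.prod_insert ha, Finset.sum_insert ha]
    have hPf0 : 0 ≤ ∏ i ∈ s, f i := Finset.prod_nonneg fun i _ => (hf i).1
    have hPf1 : ∏ i ∈ s, f i ≤ 1 := Finset.prod_le_one (fun i _ => (hf i).1) (fun i _ => (hf i).2)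
    have hPg0 : 0 ≤ ∏ i ∈ s, g i := Finset.prod_nonneg fun i _ => (hg i).1
    have key : f a * ∏ i ∈ s, f i - g a * ∏ i ∈ s, g i
        = (f a - g a) * ∏ i ∈ s, f i + g a * (∏ i ∈ s, f i - ∏ i ∈ s, g i) := by ring
    rw [key]
    calc |(f a - g a) * ∏ i ∈ s, f i + g a * (∏ i ∈ s, f i - ∏ i ∈ s, g i)|
        ≤ |(f a - g a) * ∏ i ∈ s, f i| + |g a * (∏ i ∈ s, f i - ∏ i ∈ s, g i)| := abs_add_le _ _
      _ = |f a - g a| * |∏ i ∈ s, f i| + |g a| * |∏ i ∈ s, f i - ∏ i ∈ s, g i| := by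
          rw [abs_mul, abs_mul]
      _ ≤ |f a - g a| * 1 + 1 * (∑ i ∈ s, |f i - g i|) := by
          gcongr
          · rw [abs_of_nonneg hPf0]; exact hPf1
          · rw [abs_of_nonneg (hg a).1]; exact (hg a).2
      _ = |f a - g a| + ∑ i ∈ s, |f i - g i| := by ring

theorem nsw_lipschitz_in_mu (N K : ℕ) (p : Fin K → ℝ) (hp : p ∈ simplex K)
    (μ₁ μ₂ : Fin N → Fin K → ℝ)
    (hμ₁ : ∀ i j, μ₁ i j ∈ Set.Icc (0 : ℝ) 1) (hμ₂ : ∀ i j, μ₂ i j ∈ Set.Icc (0 : ℝ) 1) :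
    |NSW p μ₁ - NSW p μ₂| ≤ ∑ i, ∑ j, p j * |μ₁ i j - μ₂ i j| := by
  obtain ⟨hp0, hp1⟩ := hp
  have bound : ∀ (μ : Fin N → Fin K → ℝ), (∀ i j, μ i j ∈ Set.Icc (0:ℝ) 1) →
      ∀ i, 0 ≤ ∑ j, p j * μ i j ∧ ∑ j, p j * μ i j ≤ 1 := by
    intro μ hμ i
    constructor
    · exact Finset.sum_nonneg fun j _ => mul_nonneg (hp0 j) (hμ i j).1
    · calc ∑ j, p j * μ i j ≤ ∑ j, p j := by
            apply Finset.sum_le_sum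
            intro j _
            nlinarith [(hμ i j).2, hp0 j]
        _ = 1 := hp1
  have h := abs_prod_sub_prod_le Finset.univ (fun i => ∑ j, p j * μ₁ i j)
    (fun i => ∑ j, p j * μ₂ i j) (bound μ₁ hμ₁) (bound μ₂ hμ₂)
  refine h.trans (Finset.sum_le_sum fun i _ => ?_)
  rw [← Finset.sum_sub_distrib]
  refine (Finset.abs_sum_le_sum_abs _ _).trans (Finset.sum_le_sum fun j _ => ?_)
  rw [← mul_sub, abs_mul, abs_of_nonneg (hp0 j)]
end

section
/- Suppose |μ̂_{i,j} − μ*_{i,j}| ≤ r_j for every i ∈ [N], j ∈ [K], where μ̂, μ* ∈ [0,1]^{N×K} and r_j ≥ 0. Then for every p in the K-simplex, |NSW(p,μ̂) − NSW(p,μ*)| ≤ N · ∑_{j=1}^K p_j · r_j. -/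
open Finset

lemma abs_prod_sub_prod_le_s6 {ι : Type*} (s : Finset ι) (a b : ι → ℝ)
    (ha : ∀ i ∈ s, a i ∈ Set.Icc (0:ℝ) 1) (hb : ∀ i ∈ s, b i ∈ Set.Icc (0:ℝ) 1) :
    |∏ i ∈ s, a i - ∏ i ∈ s, b i| ≤ ∑ i ∈ s, |a i - b i| := by
  induction s using Finset.cons_induction with
  | empty => simp
  | cons i s hi ih =>
    simp only [Finset.prod_cons, Finset.sum_cons]
    have hai := ha i (Finset.mem_cons_self i s)
    have hpb : ∏ j ∈ s, b j ∈ Set.Icc (0:ℝ) 1 := by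
      constructor
      · exact Finset.prod_nonneg fun j hj => (hb j (Finset.mem_cons_of_mem hj)).1
      · exact Finset.prod_le_one (fun j hj => (hb j (Finset.mem_cons_of_mem hj)).1)
          (fun j hj => (hb j (Finset.mem_cons_of_mem hj)).2)
    have key : a i * ∏ j ∈ s, a j - b i * ∏ j ∈ s, b j
        = a i * (∏ j ∈ s, a j - ∏ j ∈ s, b j) + (a i - b i) * ∏ j ∈ s, b j := by ring
    rw [key]
    calc |a i * (∏ j ∈ s, a j - ∏ j ∈ s, b j) + (a i - b i) * ∏ j ∈ s, b j|
        ≤ |a i * (∏ j ∈ s, a j - ∏ j ∈ s, b j)| + |(a i - b i) * ∏ j ∈ s, b j| := abs_add_le _ _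
      _ ≤ |∏ j ∈ s, a j - ∏ j ∈ s, b j| + |a i - b i| := by
          rw [abs_mul, abs_mul]
          gcongr
          · calc |a i| * _ ≤ 1 * |∏ j ∈ s, a j - ∏ j ∈ s, b j| := by
                  gcongr; rw [abs_le]; exact ⟨by linarith [hai.1], hai.2⟩
              _ = _ := one_mul _
          · calc |a i - b i| * |∏ j ∈ s, b j| ≤ |a i - b i| * 1 := by
                  gcongr; rw [abs_le]; exact ⟨by linarith [hpb.1], hpb.2⟩
              _ = _ := mul_one _
      _ ≤ |a i - b i| + ∑ j ∈ s, |a j - b j| := by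
          rw [add_comm]; gcongr
          exact ih (fun j hj => ha j (Finset.mem_cons_of_mem hj))
            (fun j hj => hb j (Finset.mem_cons_of_mem hj))

theorem nsw_close_of_entrywise_close (N K : ℕ) (μhat μstar : Fin N → Fin K → ℝ)
    (hμhat : ∀ i j, μhat i j ∈ Set.Icc (0 : ℝ) 1)
    (hμstar : ∀ i j, μstar i j ∈ Set.Icc (0 : ℝ) 1)
    (r : Fin K → ℝ) (hr : ∀ j, 0 ≤ r j)
    (hclose : ∀ i j, |μhat i j - μstar i j| ≤ r j)
    (p : Fin K → ℝ) (hp : p ∈ simplex K) :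
    |NSW p μhat - NSW p μstar| ≤ (N : ℝ) * ∑ j, p j * r j := by
  obtain ⟨hp0, hp1⟩ := hp
  have hmem : ∀ (μ : Fin N → Fin K → ℝ), (∀ i j, μ i j ∈ Set.Icc (0:ℝ) 1) →
      ∀ i, (∑ j, p j * μ i j) ∈ Set.Icc (0:ℝ) 1 := by
    intro μ hμ i
    constructor
    · exact Finset.sum_nonneg fun j _ => mul_nonneg (hp0 j) (hμ i j).1
    · calc ∑ j, p j * μ i j ≤ ∑ j, p j := by
            apply Finset.sum_le_sum
            intro j _
            calc p j * μ i j ≤ p j * 1 := by gcongr; exacts [hp0 j, (hμ i j).2]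
              _ = p j := mul_one _
        _ = 1 := hp1
  have h1 := abs_prod_sub_prod_le_s6 Finset.univ (fun i => ∑ j, p j * μhat i j)
    (fun i => ∑ j, p j * μstar i j) (fun i _ => hmem μhat hμhat i)
    (fun i _ => hmem μstar hμstar i)
  refine h1.trans ?_
  calc ∑ i, |∑ j, p j * μhat i j - ∑ j, p j * μstar i j|
      ≤ ∑ i : Fin N, ∑ j, p j * r j := by
        apply Finset.sum_le_sum
        intro i _
        rw [← Finset.sum_sub_distrib]
        refine (Finset.abs_sum_le_sum_abs _ _).trans ?_
        apply Finset.sum_le_sum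
        intro j _
        rw [← mul_sub, abs_mul, abs_of_nonneg (hp0 j)]
        exact mul_le_mul_of_nonneg_left (hclose i j) (hp0 j)
    _ = (N : ℝ) * ∑ j, p j * r j := by
        rw [Finset.sum_const, Finset.card_univ, Fintype.card_fin, nsmul_eq_mul]
end

section
/- Let μ ∈ [0,1]^{N×K} with all entries strictly positive, and let p* maximize NSW(p,μ) = ∏_{i=1}^N (∑_j p_j μ_{i,j}) over the K-simplex. Then for every arm j ∈ [K], ∑_{i=1}^N μ_{i,j} / (∑_{k=1}^K p*_k μ_{i,k}) ≤ N, with equality for every j such that p*_j > 0. -/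
open Finset

/-!
Restrict NSW to the line `t ↦ p* + t • (e_j - p*)`, which stays in the simplex for
`t ∈ [-p*_j, 1]`. With `S_i = ∑_k p*_k μ_{i,k} > 0`, its derivative at `0` is the logarithmic
derivative of a product of affine functions, `NSW p* μ * (∑_i μ_{i,j} / S_i - N)`.
Maximality at `t = 0` forces this to be `≤ 0`, and `= 0` when `0` is an interior point of
`[-p*_j, 1]`, i.e. when `p*_j > 0`.
-/

theorem IsLocalMaxOn.hasDerivAt_nonpos_of_Icc {f : ℝ → ℝ} {f' a b : ℝ} (hab : a < b)
    (hmax : IsLocalMaxOn f (Set.Icc a b) a) (hf : HasDerivAt f f' a) : f' ≤ 0 := by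
  have hcone : b - a ∈ posTangentConeAt (Set.Icc a b) a :=
    mem_posTangentConeAt_of_segment_subset (by rw [add_sub_cancel, segment_eq_Icc hab.le])
  have hslope : f' * (b - a) ≤ 0 := by
    simpa [mul_comm] using hmax.hasFDerivWithinAt_nonpos hf.hasFDerivAt.hasFDerivWithinAt hcone
  exact nonpos_of_mul_nonpos_left hslope (sub_pos.2 hab)

theorem hasDerivAt_prod_add_mul {ι 𝕜 : Type*} [NontriviallyNormedField 𝕜] (s : Finset ι)
    (a b : ι → 𝕜) (ha : ∀ i ∈ s, a i ≠ 0) :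
    HasDerivAt (fun t => ∏ i ∈ s, (a i + t * b i)) ((∏ i ∈ s, a i) * ∑ i ∈ s, b i / a i) 0 := by
  classical
  refine (HasDerivAt.fun_finsetProd (u := s) (x := (0 : 𝕜))
    (fun i _ => ((hasDerivAt_id' (0 : 𝕜)).mul_const (b i)).const_add (a i))).congr_deriv ?_
  simp only [zero_mul, add_zero, one_mul, smul_eq_mul, mul_sum]
  refine sum_congr rfl fun i hi => ?_
  rw [← mul_prod_erase s a hi]
  field_simp [ha i hi]

section Simplex

variable {K : ℕ} {p : Fin K → ℝ}

theorem le_one_of_mem_simplex (hp : p ∈ simplex K) (j : Fin K) : p j ≤ 1 :=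
  hp.2 ▸ single_le_sum (fun k _ => hp.1 k) (mem_univ j)

theorem sum_mul_pos_of_mem_simplex (hp : p ∈ simplex K) {w : Fin K → ℝ} (hw : ∀ k, 0 < w k) :
    0 < ∑ k, p k * w k := by
  obtain ⟨j, hj⟩ : ∃ j, 0 < p j := by
    by_contra! h
    linarith [sum_nonpos fun k (_ : k ∈ univ) => h k, hp.2]
  exact sum_pos' (fun k _ => mul_nonneg (hp.1 k) (hw k).le) ⟨j, mem_univ j, mul_pos hj (hw j)⟩

theorem sum_single_sub_mul (j : Fin K) (w : Fin K → ℝ) :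
    ∑ k, (Pi.single j 1 - p : Fin K → ℝ) k * w k = w j - ∑ k, p k * w k := by
  simp [sub_mul, sum_sub_distrib, Pi.single_apply]

theorem add_smul_single_sub_mem_simplex (hp : p ∈ simplex K) (j : Fin K) {t : ℝ}
    (ht₀ : -p j ≤ t) (ht₁ : t ≤ 1) : p + t • (Pi.single j 1 - p) ∈ simplex K := by
  refine ⟨fun k => ?_, ?_⟩
  · simp only [Pi.add_apply, Pi.smul_apply, Pi.sub_apply, smul_eq_mul]
    have hpk := hp.1 k
    rcases eq_or_ne k j with rfl | hkj
    · rw [Pi.single_eq_same]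
      nlinarith [le_one_of_mem_simplex hp k]
    · rw [Pi.single_eq_of_ne hkj]
      nlinarith
  · simp [sum_add_distrib, ← mul_sum, sum_sub_distrib, hp.2]

end Simplex

theorem hasDerivAt_NSW_add_smul {N K : ℕ} (p d : Fin K → ℝ) (μ : Fin N → Fin K → ℝ)
    (hp : ∀ i, ∑ k, p k * μ i k ≠ 0) :
    HasDerivAt (fun t : ℝ => NSW (p + t • d) μ)
      (NSW p μ * ∑ i, (∑ k, d k * μ i k) / ∑ k, p k * μ i k) 0 := by
  have hline : (fun t : ℝ => NSW (p + t • d) μ) =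
      fun t => ∏ i, (∑ k, p k * μ i k + t * ∑ k, d k * μ i k) := by
    ext t
    simp only [NSW, Pi.add_apply, Pi.smul_apply, smul_eq_mul, mul_sum, ← sum_add_distrib]
    exact prod_congr rfl fun i _ => sum_congr rfl fun k _ => by ring
  rw [hline]
  exact hasDerivAt_prod_add_mul _ _ _ fun i _ => hp i

theorem nsw_first_order_condition_general (N K : ℕ)
    (μ : Fin N → Fin K → ℝ) (hμpos : ∀ i j, 0 < μ i j)
    (pstar : Fin K → ℝ) (hpstar : pstar ∈ simplex K)
    (hmax : ∀ q ∈ simplex K, NSW q μ ≤ NSW pstar μ) :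
    ∀ j : Fin K,
      (∑ i, μ i j / (∑ k, pstar k * μ i k)) ≤ (N : ℝ) ∧
      (0 < pstar j → (∑ i, μ i j / (∑ k, pstar k * μ i k)) = (N : ℝ)) := by
  intro j
  have hS : ∀ i, 0 < ∑ k, pstar k * μ i k := fun i => sum_mul_pos_of_mem_simplex hpstar (hμpos i)
  set T := ∑ i, μ i j / (∑ k, pstar k * μ i k)
  set g : ℝ → ℝ := fun t => NSW (pstar + t • (Pi.single j 1 - pstar)) μ
  have hgmax : IsMaxOn g (Set.Icc (-pstar j) 1) 0 := fun t ht => by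
    simpa [g] using hmax _ (add_smul_single_sub_mem_simplex hpstar j ht.1 ht.2)
  have hg : HasDerivAt g (NSW pstar μ * (T - N)) 0 := by
    have hd := hasDerivAt_NSW_add_smul pstar (Pi.single j 1 - pstar) μ fun i => (hS i).ne'
    simp only [sum_single_sub_mul, sub_div, sum_sub_distrib, div_self (hS _).ne'] at hd
    simpa using hd
  have hNSW : 0 < NSW pstar μ := prod_pos fun i _ => hS i
  refine ⟨?_, fun hj => ?_⟩
  · have hslope := (hgmax.on_subset (Set.Icc_subset_Icc_left (neg_nonpos.2 (hpstar.1 j))))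
      |>.localize.hasDerivAt_nonpos_of_Icc one_pos hg
    exact sub_nonpos.1 (nonpos_of_mul_nonpos_right hslope hNSW)
  · have hslope := (hgmax.isLocalMax (Icc_mem_nhds (neg_neg_of_pos hj) one_pos)).hasDerivAt_eq_zero hg
    simpa [hNSW.ne', sub_eq_zero] using hslope

theorem nsw_first_order_condition (N K : ℕ) (hN : 0 < N) (hK : 0 < K)
    (μ : Fin N → Fin K → ℝ) (hμpos : ∀ i j, 0 < μ i j) (hμle : ∀ i j, μ i j ≤ 1)
    (pstar : Fin K → ℝ) (hpstar : pstar ∈ simplex K)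
    (hmax : ∀ q ∈ simplex K, NSW q μ ≤ NSW pstar μ) :
    ∀ j : Fin K,
      (∑ i, μ i j / (∑ k, pstar k * μ i k)) ≤ (N : ℝ) ∧
      (0 < pstar j → (∑ i, μ i j / (∑ k, pstar k * μ i k)) = (N : ℝ)) :=
  nsw_first_order_condition_general N K μ hμpos pstar hpstar hmax
end
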